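/- For every positive integer m, the infinite series ∑_{n=0}^∞ (1/16)^n · C(2n,n)² · 1/(2n+1−2m)² equals (16^m / (m²·C(2m,m)²)) · ∑_{k=1}^{m−1} (1/16)^k · C(2k,k)² · (k/(2k+1)) · A(k) + (16^m / (π·m²·C(2m,m)²)) · ∑_{k=0}^{m−1} (1/16)^k · C(2k,k)² · 1/(2k+1), where A(k) := −(16^k / (2π·k²·C(2k,k)²)) · ∑_{j=0}^{k−1} (1/16)^j · C(2j,j)². -/

import Mathlib

open Real

noncomputable def catalanG : ℝ := ∑' n : ℕ, (-1 : ℝ)^n / (2*(n:ℝ)+1)^2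

noncomputable def scriptG : ℝ :=
  (∑' n : ℕ, ((1 + Complex.I)/2)^(n+1) / ((n : ℂ)+1)^3).im

noncomputable def oddHarmonic (k : ℕ) : ℝ := ∑ i ∈ Finset.range k, 1/(2*(i:ℝ)+1)

noncomputable def harm (k : ℕ) : ℝ := ∑ i ∈ Finset.range k, 1/((i:ℝ)+1)

noncomputable def A (k : ℕ) : ℝ :=
  -((16:ℝ)^k / (2*π*(k:ℝ)^2*((Nat.choose (2*k) k : ℝ))^2)) *
    ∑ j ∈ Finset.range k, (1/16 : ℝ)^j * ((Nat.choose (2*j) j : ℝ))^2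

open Filter Topology Finset

noncomputable def aa (n : ℕ) : ℝ := (1/16 : ℝ)^n * ((Nat.choose (2*n) n : ℝ))^2

lemma aa_pos (n : ℕ) : 0 < aa n := by
  have h : 0 < (Nat.choose (2*n) n : ℝ) := by
    exact_mod_cast Nat.choose_pos (by omega)
  unfold aa; positivity

lemma aa_zero : aa 0 = 1 := by simp [aa]

lemma choose_succ (n : ℕ) : ((n:ℝ)+1) * (Nat.choose (2*(n+1)) (n+1) : ℝ)
    = 2*(2*(n:ℝ)+1) * (Nat.choose (2*n) n : ℝ) := by
  have h2 : ((n+1) * Nat.centralBinom (n+1) : ℕ) = (2 * (2*n+1) * Nat.centralBinom n : ℕ) :=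
    Nat.succ_mul_centralBinom_succ n
  have h3 := congrArg (fun x : ℕ => (x : ℝ)) h2
  simp only [Nat.centralBinom] at h3
  push_cast at h3 ⊢
  linarith

lemma aa_succ (n : ℕ) : aa (n+1) * (2*(n:ℝ)+2)^2 = aa n * (2*(n:ℝ)+1)^2 := by
  have h := choose_succ n
  unfold aa
  have hsq : ((Nat.choose (2*(n+1)) (n+1) : ℝ))^2 * (((n:ℝ)+1))^2
      = (2*(2*(n:ℝ)+1))^2 * ((Nat.choose (2*n) n : ℝ))^2 := by
    have := congrArg (fun x => x^2) h
    simp only [mul_pow] at this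
    nlinarith [this]
  rw [pow_succ]
  linear_combination ((1/16:ℝ)^n/4) * hsq

lemma aa_succ' (n : ℕ) : aa (n+1) = aa n * ((2*(n:ℝ)+1)/(2*(n:ℝ)+2))^2 := by
  have h := aa_succ n
  have h2 : ((2:ℝ)*(n:ℝ)+2)^2 ≠ 0 := by positivity
  field_simp
  linarith [h]

lemma aa_le (n : ℕ) : aa n ≤ 1/((n:ℝ)+1) := by
  induction n with
  | zero => simp [aa_zero]
  | succ n ih =>
    rw [aa_succ']
    push_cast
    have key : ((2*(n:ℝ)+1)/(2*(n:ℝ)+2))^2 ≤ ((n:ℝ)+1)/((n:ℝ)+2) := by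
      rw [div_pow, div_le_div_iff₀ (by positivity) (by positivity)]
      nlinarith
    calc aa n * ((2*(n:ℝ)+1)/(2*(n:ℝ)+2))^2
        ≤ (1/((n:ℝ)+1)) * (((n:ℝ)+1)/((n:ℝ)+2)) := by
          apply mul_le_mul ih key (by positivity) (by positivity)
      _ = 1/((n:ℝ)+1+1) := by field_simp; ring

lemma aa_tendsto_zero : Tendsto aa atTop (𝓝 0) := by
  apply squeeze_zero (fun n => (aa_pos n).le) aa_le
  exact tendsto_one_div_add_atTop_nhds_zero_nat

-- Wallis: (2n+1) * aa n → 2/π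
lemma wallis_prod (k : ℕ) :
    (∏ i ∈ Finset.range k, ((2 : ℝ) * i + 2) / (2 * i + 1) * ((2 * i + 2) / (2 * i + 3)))
      * ((2*(k:ℝ)+1) * aa k) = 1 := by
  induction k with
  | zero => simp [aa_zero]
  | succ k ih =>
    rw [Finset.prod_range_succ, aa_succ']
    push_cast
    have h1 : (2*(k:ℝ)+1) ≠ 0 := by positivity
    have h2 : (2*(k:ℝ)+2) ≠ 0 := by positivity
    have h3 : (2*(k:ℝ)+3) ≠ 0 := by positivity
    have key : (2*(k:ℝ)+2) / (2*(k:ℝ)+1) * ((2*(k:ℝ)+2) / (2*(k:ℝ)+3))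
        * ((2*((k:ℝ)+1)+1) * (aa k * ((2*(k:ℝ)+1)/(2*(k:ℝ)+2))^2))
        = (2*(k:ℝ)+1) * aa k := by
      field_simp
      ring
    rw [mul_assoc, key]
    exact ih

lemma wallis_aa : Tendsto (fun n : ℕ => (2*(n:ℝ)+1) * aa n) atTop (𝓝 (2/π)) := by
  have hW := Real.tendsto_prod_pi_div_two
  have hpos : ∀ k : ℕ, (2*(k:ℝ)+1) * aa k
      = (∏ i ∈ Finset.range k, ((2 : ℝ) * i + 2) / (2 * i + 1) * ((2 * i + 2) / (2 * i + 3)))⁻¹ := by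
    intro k
    exact eq_inv_of_mul_eq_one_right (wallis_prod k)
  simp only [hpos]
  have hple : π/2 ≠ 0 := by
    have := Real.pi_pos; positivity
  simpa [inv_div] using hW.inv₀ hple

lemma odd_ne (n k : ℕ) : (2*(n:ℝ)+1-2*(k:ℝ)) ≠ 0 := by
  intro h
  have h1 : ((2*(n:ℤ)+1-2*(k:ℤ) : ℤ) : ℝ) = 0 := by push_cast; linarith
  have h2 : (2*(n:ℤ)+1-2*(k:ℤ)) = 0 := by exact_mod_cast h1
  omega

lemma base_summable : Summable (fun n : ℕ => 1/((n:ℝ)+1)^2) := by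
  have h : Summable (fun n : ℕ => 1/((n:ℝ))^2) := by
    rw [Real.summable_one_div_nat_pow]; norm_num
  have := (summable_nat_add_iff 1).2 h
  refine this.congr (fun n => ?_)
  push_cast
  ring

lemma summable_one (m : ℕ) : Summable (fun n : ℕ => aa n / (2*(n:ℝ)+1-2*(m:ℝ))) := by
  apply Summable.of_norm_bounded_eventually_nat (g := fun n => 1/((n:ℝ)+1)^2) base_summable
  filter_upwards [eventually_ge_atTop (2*m)] with n hn
  have hd : (0:ℝ) < 2*(n:ℝ)+1-2*(m:ℝ) := by
    have : (2*m : ℝ) ≤ (n:ℝ) := by exact_mod_cast hn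
    linarith
  have hd2 : ((n:ℝ)+1) ≤ 2*(n:ℝ)+1-2*(m:ℝ) := by
    have : (2*m : ℝ) ≤ (n:ℝ) := by exact_mod_cast hn
    linarith
  rw [Real.norm_eq_abs, abs_div, abs_of_pos (aa_pos n), abs_of_pos hd]
  rw [div_le_div_iff₀ hd (by positivity)]
  calc aa n * ((n:ℝ)+1)^2 ≤ (1/((n:ℝ)+1)) * ((n:ℝ)+1)^2 := by
        apply mul_le_mul_of_nonneg_right (aa_le n) (by positivity)
    _ = (n:ℝ)+1 := by field_simp
    _ ≤ 1 * (2*(n:ℝ)+1-2*(m:ℝ)) := by linarith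
  
lemma summable_two (m : ℕ) : Summable (fun n : ℕ => aa n / (2*(n:ℝ)+1-2*(m:ℝ))^2) := by
  apply Summable.of_norm_bounded_eventually_nat (g := fun n => 1/((n:ℝ)+1)^2) base_summable
  filter_upwards [eventually_ge_atTop (2*m)] with n hn
  have hm : (2*m : ℝ) ≤ (n:ℝ) := by exact_mod_cast hn
  have hd : (0:ℝ) < 2*(n:ℝ)+1-2*(m:ℝ) := by linarith
  have hd2 : ((n:ℝ)+1) ≤ 2*(n:ℝ)+1-2*(m:ℝ) := by linarith
  rw [Real.norm_eq_abs, abs_div, abs_of_pos (aa_pos n), abs_of_pos (by positivity : (0:ℝ) < (2*(n:ℝ)+1-2*(m:ℝ))^2)]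
  rw [div_le_div_iff₀ (by positivity) (by positivity)]
  have h1 : aa n ≤ 1 := by
    have := aa_le n
    have h2 : 1/((n:ℝ)+1) ≤ 1 := by
      rw [div_le_one (by positivity)]; linarith [Nat.cast_nonneg (α := ℝ) n]
    linarith
  calc aa n * ((n:ℝ)+1)^2 ≤ 1 * (2*(n:ℝ)+1-2*(m:ℝ))^2 := by
        have := mul_le_mul h1 (by nlinarith : ((n:ℝ)+1)^2 ≤ (2*(n:ℝ)+1-2*(m:ℝ))^2)
          (by positivity) (by norm_num)
        simpa using this
    _ = 1 * (2*(n:ℝ)+1-2*(m:ℝ))^2 := rfl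

lemma hasSum_tele (f : ℕ → ℝ) (L : ℝ) (hL : Tendsto f atTop (𝓝 L))
    (hs : Summable (fun n => f (n+1) - f n)) :
    HasSum (fun n => f (n+1) - f n) (L - f 0) := by
  have hnorm : Summable (fun n => ‖f (n+1) - f n‖) := by
    simpa [Real.norm_eq_abs] using hs.abs
  rw [hasSum_iff_tendsto_nat_of_summable_norm hnorm]
  have hps : ∀ N : ℕ, ∑ n ∈ range N, (f (n+1) - f n) = f N - f 0 :=
    fun N => Finset.sum_range_sub f N
  simp only [hps]
  exact hL.sub_const (f 0)

lemma lim_aar {R : ℕ → ℝ} {c : ℝ} (hR : Tendsto (fun n : ℕ => R n / (2*(n:ℝ)+1)) atTop (𝓝 c)) :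
    Tendsto (fun n : ℕ => aa n * R n) atTop (𝓝 (2/π * c)) := by
  have h := wallis_aa.mul hR
  refine h.congr (fun n => ?_)
  have : (2*(n:ℝ)+1) ≠ 0 := by positivity
  field_simp


lemma aa_def (n : ℕ) : aa n = (1/16 : ℝ)^n * ((Nat.choose (2*n) n : ℝ))^2 := rfl

noncomputable def UU (m : ℕ) : ℝ := ∑' n : ℕ, aa n / (2*(n:ℝ)+1-2*(m:ℝ))
noncomputable def TT (m : ℕ) : ℝ := ∑' n : ℕ, aa n / (2*(n:ℝ)+1-2*(m:ℝ))^2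

lemma hasSum_UU (m : ℕ) : HasSum (fun n : ℕ => aa n / (2*(n:ℝ)+1-2*(m:ℝ))) (UU m) :=
  (summable_one m).hasSum

lemma hasSum_TT (m : ℕ) : HasSum (fun n : ℕ => aa n / (2*(n:ℝ)+1-2*(m:ℝ))^2) (TT m) :=
  (summable_two m).hasSum

/-- certificate for the U-step -/
noncomputable def RU (k n : ℕ) : ℝ :=
  -2*(n:ℝ)^2*(2*(n:ℝ)-2*(k:ℝ)+1) / ((2*(n:ℝ)-1-2*(k:ℝ))*(2*(n:ℝ)+1-2*(k:ℝ)))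

lemma RU_zero (k : ℕ) : RU k 0 = 0 := by simp [RU]

lemma keyU (k n : ℕ) :
    2*((k:ℝ)+1)^2*aa (k+1)*(aa n/(2*(n:ℝ)+1-2*((k:ℝ)+1))) - 2*(k:ℝ)^2*aa k*(aa n/(2*(n:ℝ)+1-2*(k:ℝ)))
    = aa k * (aa (n+1) * RU k (n+1)) - aa k * (aa n * RU k n) := by
  have h1 := odd_ne n k
  have h2 := odd_ne n (k+1)
  have h3 := odd_ne (n+1) k
  have h4 := odd_ne (n+1) (k+1)
  push_cast at h1 h2 h3 h4
  have h2' : (2*(n:ℝ)-1-2*(k:ℝ)) ≠ 0 := by intro h; apply h2; linarith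
  have h3' : (2*((n:ℝ)+1)-1-2*(k:ℝ)) ≠ 0 := by intro h; apply h1; linarith
  have h4' : (2*((n:ℝ)+1)+1-2*((k:ℝ)+1)) ≠ 0 := by intro h; apply h1; linarith
  rw [aa_succ' n, aa_succ' k]
  unfold RU
  push_cast
  have h5 : (2*(n:ℝ)+2) ≠ 0 := by positivity
  have h6 : (2*(k:ℝ)+2) ≠ 0 := by positivity
  have h7 : (2*(n:ℝ)+1-2*(k:ℝ)) ≠ 0 := h1
  have h8 : (2*((n:ℝ)+1)+1-2*(k:ℝ)) ≠ 0 := by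
    intro h; apply h3; push_cast; linarith
  field_simp
  ring

lemma limRU (k : ℕ) :
    Tendsto (fun n : ℕ => RU k n / (2*(n:ℝ)+1)) atTop (𝓝 (-(1/2))) := by
  have h0 : Tendsto (fun n : ℕ => 1/((n:ℝ)+1)) atTop (𝓝 0) :=
    tendsto_one_div_add_atTop_nhds_zero_nat
  set F : ℝ → ℝ := fun x =>
    (-2*(1-x)^2*(2-(2*(k:ℝ)+1)*x)) / ((2-x)*(2-(2*(k:ℝ)+3)*x)*(2-(2*(k:ℝ)+1)*x)) with hF
  have hc : ContinuousAt F 0 := by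
    apply ContinuousAt.div (by fun_prop) (by fun_prop)
    norm_num
  have h := hc.tendsto.comp h0
  have hval : F 0 = -(1/2) := by simp [hF]; norm_num
  rw [hval] at h
  refine h.congr (fun n => ?_)
  show F (1/((n:ℝ)+1)) = RU k n / (2*(n:ℝ)+1)
  have h1 := odd_ne n k
  have h2' : (2*(n:ℝ)-1-2*(k:ℝ)) ≠ 0 := by
    have := odd_ne n (k+1); push_cast at this; intro h; apply this; linarith
  have hn1 : ((n:ℝ)+1) ≠ 0 := by positivity
  have h2n1 : (2*(n:ℝ)+1) ≠ 0 := by positivity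
  rw [hF]
  simp only
  rw [show (1 - 1/((n:ℝ)+1)) = (n:ℝ)/((n:ℝ)+1) by field_simp; ring,
      show (2 - (2*(k:ℝ)+1)*(1/((n:ℝ)+1))) = (2*(n:ℝ)+1-2*(k:ℝ))/((n:ℝ)+1) by
        field_simp; ring,
      show (2 - (2*(k:ℝ)+3)*(1/((n:ℝ)+1))) = (2*(n:ℝ)-1-2*(k:ℝ))/((n:ℝ)+1) by
        field_simp; ring,
      show (2 - 1/((n:ℝ)+1)) = (2*(n:ℝ)+1)/((n:ℝ)+1) by field_simp; ring]
  unfold RU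
  field_simp
  ring

lemma Ustep (k : ℕ) :
    2*((k:ℝ)+1)^2*aa (k+1)*UU (k+1) - 2*(k:ℝ)^2*aa k*UU k = -(1/π) * aa k := by
  have hUk1 : HasSum (fun n : ℕ => aa n / (2*(n:ℝ)+1-2*((k:ℝ)+1))) (UU (k+1)) := by
    have := hasSum_UU (k+1); push_cast at this; exact this
  have hcombo := (hUk1.mul_left (2*((k:ℝ)+1)^2*aa (k+1))).sub
    ((hasSum_UU k).mul_left (2*(k:ℝ)^2*aa k))
  have hfe : (fun n : ℕ => 2*((k:ℝ)+1)^2*aa (k+1) * (aa n / (2*(n:ℝ)+1-2*((k:ℝ)+1)))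
      - 2*(k:ℝ)^2*aa k * (aa n / (2*(n:ℝ)+1-2*(k:ℝ))))
      = (fun n : ℕ => aa k * (aa (n+1) * RU k (n+1)) - aa k * (aa n * RU k n)) :=
    funext (fun n => keyU k n)
  rw [hfe] at hcombo
  have hlim : Tendsto (fun n : ℕ => aa k * (aa n * RU k n)) atTop
      (𝓝 (aa k * (2/π * (-(1/2))))) :=
    (lim_aar (limRU k)).const_mul (aa k)
  have htele := hasSum_tele (fun n : ℕ => aa k * (aa n * RU k n)) _ hlim hcombo.summable
  have heq := HasSum.unique hcombo htele
  simp only [RU_zero, mul_zero, sub_zero] at heq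
  have hπ : π ≠ 0 := Real.pi_ne_zero
  rw [heq]
  field_simp

/-- certificate for the T-step -/
noncomputable def RT (m n : ℕ) : ℝ :=
  (n:ℝ)^2*( -3*(2*(m:ℝ)-1)^2*(2*(m:ℝ)+1) + 8*(2*(m:ℝ)-1)*(4*(m:ℝ)+1)*(n:ℝ)
    + (4-56*(m:ℝ))*(n:ℝ)^2 + 16*(n:ℝ)^3 )
  / ((2*(m:ℝ)+1)*(2*(n:ℝ)-1-2*(m:ℝ))^2*(2*(n:ℝ)+1-2*(m:ℝ))^2)

lemma RT_zero (m : ℕ) : RT m 0 = 0 := by simp [RT]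

lemma keyT (m n : ℕ) :
    ((m:ℝ)+1)^2*aa (m+1)*(aa n/(2*(n:ℝ)+1-2*((m:ℝ)+1))^2)
      - (m:ℝ)^2*aa m*(aa n/(2*(n:ℝ)+1-2*(m:ℝ))^2)
      - ((m:ℝ)*aa m/(2*(m:ℝ)+1))*(aa n/(2*(n:ℝ)+1-2*(m:ℝ)))
    = aa m * (aa (n+1) * RT m (n+1)) - aa m * (aa n * RT m n) := by
  have h1 := odd_ne n m
  have h2 := odd_ne n (m+1)
  have h3 := odd_ne (n+1) m
  push_cast at h2 h3
  have h2' : (2*(n:ℝ)-1-2*(m:ℝ)) ≠ 0 := by intro h; apply h2; linarith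
  have h3' : (2*((n:ℝ)+1)-1-2*(m:ℝ)) ≠ 0 := by intro h; apply h1; linarith
  have h3'' : (2*((n:ℝ)+1)+1-2*(m:ℝ)) ≠ 0 := h3
  have h4 : (2*(n:ℝ)+1-2*((m:ℝ)+1)) ≠ 0 := by intro h; apply h2; linarith
  rw [aa_succ' n, aa_succ' m]
  unfold RT
  push_cast
  have h5 : (2*(n:ℝ)+2) ≠ 0 := by positivity
  have h6 : (2*(m:ℝ)+2) ≠ 0 := by positivity
  have h7 : (2*(m:ℝ)+1) ≠ 0 := by positivity
  have e1 : (2*(n:ℝ)+1-((m:ℝ)+1)*2) ≠ 0 := by intro h; apply h4; linarith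
  have e2 : (2*(n:ℝ)+1-(m:ℝ)*2) ≠ 0 := by intro h; apply h1; linarith
  have e3 : (2*((n:ℝ)+1)-1-(m:ℝ)*2) ≠ 0 := by intro h; apply h3'; linarith
  have e4 : (2*((n:ℝ)+1)+1-(m:ℝ)*2) ≠ 0 := by intro h; apply h3''; linarith
  have e5 : (2*(n:ℝ)-1-(m:ℝ)*2) ≠ 0 := by intro h; apply h2'; linarith
  field_simp
  ring

lemma limRT (m : ℕ) :
    Tendsto (fun n : ℕ => RT m n / (2*(n:ℝ)+1)) atTop (𝓝 (1/(2*(2*(m:ℝ)+1)))) := by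
  have h0 : Tendsto (fun n : ℕ => 1/((n:ℝ)+1)) atTop (𝓝 0) :=
    tendsto_one_div_add_atTop_nhds_zero_nat
  set F : ℝ → ℝ := fun x =>
    ((1-x)^2*( -3*(2*(m:ℝ)-1)^2*(2*(m:ℝ)+1)*x^3 + 8*(2*(m:ℝ)-1)*(4*(m:ℝ)+1)*x^2*(1-x)
      + (4-56*(m:ℝ))*x*(1-x)^2 + 16*(1-x)^3 ))
    / ((2*(m:ℝ)+1)*(2-x)*(2-(2*(m:ℝ)+3)*x)^2*(2-(2*(m:ℝ)+1)*x)^2) with hF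
  have h7 : (2*(m:ℝ)+1) ≠ 0 := by positivity
  have hc : ContinuousAt F 0 := by
    apply ContinuousAt.div (by fun_prop) (by fun_prop)
    simp only [mul_zero, sub_zero, mul_one]
    positivity
  have h := hc.tendsto.comp h0
  have hval : F 0 = 1/(2*(2*(m:ℝ)+1)) := by
    simp only [hF]
    norm_num
    field_simp
    ring
  rw [hval] at h
  refine h.congr (fun n => ?_)
  show F (1/((n:ℝ)+1)) = RT m n / (2*(n:ℝ)+1)
  have h1 := odd_ne n m
  have h2' : (2*(n:ℝ)-1-2*(m:ℝ)) ≠ 0 := by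
    have := odd_ne n (m+1); push_cast at this; intro h; apply this; linarith
  have hn1 : ((n:ℝ)+1) ≠ 0 := by positivity
  have h2n1 : (2*(n:ℝ)+1) ≠ 0 := by positivity
  rw [hF]
  simp only
  rw [show (1 - 1/((n:ℝ)+1)) = (n:ℝ)/((n:ℝ)+1) by field_simp; ring,
      show (2 - (2*(m:ℝ)+1)*(1/((n:ℝ)+1))) = (2*(n:ℝ)+1-2*(m:ℝ))/((n:ℝ)+1) by
        field_simp; ring,
      show (2 - (2*(m:ℝ)+3)*(1/((n:ℝ)+1))) = (2*(n:ℝ)-1-2*(m:ℝ))/((n:ℝ)+1) by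
        field_simp; ring,
      show (2 - 1/((n:ℝ)+1)) = (2*(n:ℝ)+1)/((n:ℝ)+1) by field_simp; ring]
  unfold RT
  field_simp

lemma Tstep (m : ℕ) :
    ((m:ℝ)+1)^2*aa (m+1)*TT (m+1) - (m:ℝ)^2*aa m*TT m
      - ((m:ℝ)*aa m/(2*(m:ℝ)+1))*UU m
    = (1/π) * (aa m/(2*(m:ℝ)+1)) := by
  have hTm1 : HasSum (fun n : ℕ => aa n / (2*(n:ℝ)+1-2*((m:ℝ)+1))^2) (TT (m+1)) := by
    have := hasSum_TT (m+1); push_cast at this; exact this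
  have hcombo := ((hTm1.mul_left (((m:ℝ)+1)^2*aa (m+1))).sub
    ((hasSum_TT m).mul_left ((m:ℝ)^2*aa m))).sub
    ((hasSum_UU m).mul_left ((m:ℝ)*aa m/(2*(m:ℝ)+1)))
  have hfe : (fun n : ℕ => (((m:ℝ)+1)^2*aa (m+1) * (aa n / (2*(n:ℝ)+1-2*((m:ℝ)+1))^2)
      - (m:ℝ)^2*aa m * (aa n / (2*(n:ℝ)+1-2*(m:ℝ))^2))
      - ((m:ℝ)*aa m/(2*(m:ℝ)+1)) * (aa n / (2*(n:ℝ)+1-2*(m:ℝ))))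
      = (fun n : ℕ => aa m * (aa (n+1) * RT m (n+1)) - aa m * (aa n * RT m n)) := by
    funext n
    exact keyT m n
  rw [hfe] at hcombo
  have hlim : Tendsto (fun n : ℕ => aa m * (aa n * RT m n)) atTop
      (𝓝 (aa m * (2/π * (1/(2*(2*(m:ℝ)+1)))))) :=
    (lim_aar (limRT m)).const_mul (aa m)
  have htele := hasSum_tele (fun n : ℕ => aa m * (aa n * RT m n)) _ hlim hcombo.summable
  have heq := HasSum.unique hcombo htele
  simp only [RT_zero, mul_zero, sub_zero] at heq
  have hπ : π ≠ 0 := Real.pi_ne_zero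
  have h7 : (2*(m:ℝ)+1) ≠ 0 := by positivity
  calc ((m:ℝ)+1)^2*aa (m+1)*TT (m+1) - (m:ℝ)^2*aa m*TT m - ((m:ℝ)*aa m/(2*(m:ℝ)+1))*UU m
      = ((m:ℝ)+1)^2*aa (m+1)*TT (m+1) - (m:ℝ)^2*aa m*TT m - ((m:ℝ)*aa m/(2*(m:ℝ)+1)*UU m) := by
        ring
    _ = aa m * (2/π * (1/(2*(2*(m:ℝ)+1)))) := heq
    _ = (1/π) * (aa m/(2*(m:ℝ)+1)) := by field_simp

lemma Uclosed (k : ℕ) :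
    2*(k:ℝ)^2*aa k*UU k = -(1/π) * ∑ j ∈ Finset.range k, aa j := by
  induction k with
  | zero => simp
  | succ k ih =>
    have hstep := Ustep k
    rw [Finset.sum_range_succ]
    push_cast
    linear_combination hstep + ih

lemma choose_ne (k : ℕ) : ((Nat.choose (2*k) k : ℝ)) ≠ 0 := by
  have : 0 < Nat.choose (2*k) k := Nat.choose_pos (by omega)
  positivity

lemma A_eq (k : ℕ) (hk : 0 < k) : A k = UU k := by
  have h := Uclosed k
  have hπ : π ≠ 0 := Real.pi_ne_zero
  have hk' : ((k:ℝ)) ≠ 0 := by positivity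
  have hC := choose_ne k
  have haa : aa k = ((Nat.choose (2*k) k : ℝ))^2 / (16:ℝ)^k := by
    rw [aa_def, one_div, inv_pow, div_eq_mul_inv, mul_comm]
  have hsum : ∑ j ∈ Finset.range k, (1/16 : ℝ)^j * ((Nat.choose (2*j) j : ℝ))^2
      = ∑ j ∈ Finset.range k, aa j := by
    refine Finset.sum_congr rfl (fun j _ => ?_)
    rw [aa_def]
  have h16 : ((16:ℝ)^k) ≠ 0 := by positivity
  unfold A
  rw [hsum]
  rw [haa] at h
  have haane : aa k ≠ 0 := (aa_pos k).ne'
  rw [haa] at haane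
  field_simp at h ⊢
  linarith [h]

lemma main_id (m : ℕ) :
    (m:ℝ)^2*aa m*TT m
      = (∑ k ∈ Finset.Ico 1 m, aa k * ((k:ℝ)/(2*(k:ℝ)+1)) * UU k)
        + (1/π) * ∑ k ∈ Finset.range m, aa k/(2*(k:ℝ)+1) := by
  induction m with
  | zero => simp
  | succ m ih =>
    have hstep := Tstep m
    have hIco : ∑ k ∈ Finset.Ico 1 (m+1), aa k * ((k:ℝ)/(2*(k:ℝ)+1)) * UU k
        = (∑ k ∈ Finset.Ico 1 m, aa k * ((k:ℝ)/(2*(k:ℝ)+1)) * UU k)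
          + aa m * ((m:ℝ)/(2*(m:ℝ)+1)) * UU m := by
      rcases Nat.eq_zero_or_pos m with h|h
      · subst h; simp
      · exact Finset.sum_Ico_succ_top h _
    rw [hIco, Finset.sum_range_succ]
    push_cast
    linear_combination hstep + ih

theorem stmt13 (m : ℕ) (hm : 0 < m) :
    ∑' n : ℕ, (1/16 : ℝ)^n * ((Nat.choose (2*n) n : ℝ))^2 / (2*(n:ℝ)+1-2*(m:ℝ))^2 =
    ((16:ℝ)^m / ((m:ℝ)^2*((Nat.choose (2*m) m : ℝ))^2)) *
      (∑ k ∈ Finset.Ico 1 m, (1/16 : ℝ)^k * ((Nat.choose (2*k) k : ℝ))^2 *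
        ((k:ℝ)/(2*(k:ℝ)+1)) * A k)
    + ((16:ℝ)^m / (π*(m:ℝ)^2*((Nat.choose (2*m) m : ℝ))^2)) *
      ∑ k ∈ Finset.range m, (1/16 : ℝ)^k * ((Nat.choose (2*k) k : ℝ))^2 / (2*(k:ℝ)+1) := by
  have hπ : π ≠ 0 := Real.pi_ne_zero
  have hC := choose_ne m
  have hm' : ((m:ℝ)) ≠ 0 := by
    have : (0:ℝ) < (m:ℝ) := by exact_mod_cast hm
    positivity
  have h16 : ((16:ℝ)^m) ≠ 0 := by positivity
  have hL : (∑' n : ℕ, (1/16 : ℝ)^n * ((Nat.choose (2*n) n : ℝ))^2 / (2*(n:ℝ)+1-2*(m:ℝ))^2)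
      = TT m := by
    unfold TT; exact tsum_congr (fun n => by rw [aa_def])
  have hA : ∑ k ∈ Finset.Ico 1 m, (1/16:ℝ)^k * ((Nat.choose (2*k) k : ℝ))^2
        * ((k:ℝ)/(2*(k:ℝ)+1)) * A k
      = ∑ k ∈ Finset.Ico 1 m, aa k * ((k:ℝ)/(2*(k:ℝ)+1)) * UU k := by
    refine Finset.sum_congr rfl (fun k hk => ?_)
    rw [aa_def, A_eq k (Finset.mem_Ico.1 hk).1]
  have hB : ∑ k ∈ Finset.range m, (1/16:ℝ)^k * ((Nat.choose (2*k) k : ℝ))^2 / (2*(k:ℝ)+1)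
      = ∑ k ∈ Finset.range m, aa k / (2*(k:ℝ)+1) := by
    refine Finset.sum_congr rfl (fun k _ => ?_)
    rw [aa_def]
  rw [hL, hA, hB]
  have hmain := main_id m
  set S1 := ∑ k ∈ Finset.Ico 1 m, aa k * ((k:ℝ)/(2*(k:ℝ)+1)) * UU k with hS1
  set S2 := ∑ k ∈ Finset.range m, aa k / (2*(k:ℝ)+1) with hS2
  rw [aa_def] at hmain
  rw [show ((1:ℝ)/16)^m = ((16:ℝ)^m)⁻¹ by rw [one_div, inv_pow]] at hmain
  field_simp at hmain ⊢
  linear_combination hmain
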